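/- Let A ∈ (c₀, c₀), i.e., A = (a_{nk}) is an infinite matrix with all rows in ℓ¹ such that Ax ∈ c₀ for every x ∈ c₀, and let L_A : c₀ → c₀ be the induced bounded linear operator. Then ‖L_A‖_χ = limsup_{n→∞} ‖A_n‖_{ℓ¹} = limsup_{n→∞} Σ_{k=0}^∞ |a_{nk}|, where ‖L_A‖_χ = χ(L_A(B_{c₀})) is the Hausdorff measure of noncompactness of the operator. In particular, L_A is compact if and only if lim_{n→∞} Σ_k |a_{nk}| = 0. -/

import Mathlib

/-!
The points of a finite ε-net of `Q ⊆ c₀` are null sequences, so `|y n| < ε + o(1)` uniformly in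
`y ∈ Q`; conversely, if `|y n| ≤ b` on `Q` for all `n ≥ m`, a finite net of a bounded cube in the
first `m` coordinates is a `c`-net of `Q` for every `c > b`. Hence `χ(Q) = limsup_n r n` for the
coordinate suprema `r n = sup_{y ∈ Q} |y n|`. For `Q = A(B_{c₀})`, `r n = ‖A_n‖₁`: the bound `≤`
is Hölder's inequality, and truncated sign vectors `(sign a_{n0}, …, sign a_{n,K-1}, 0, 0, …)`
approach it. Finally, the closure of `Q` is compact iff `Q` is totally bounded, i.e. bounded with
`χ(Q) = 0`, i.e. `r` is bounded with `limsup r = 0`.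
-/

open Filter

/-- The Banach space `c₀` of real null sequences with the supremum norm, realized as a
(metric) subspace of `ℓ∞`. -/
abbrev c0Space : Type :=
  {x : lp (fun _ : ℕ => ℝ) (⊤ : ENNReal) // Tendsto (fun n => x n) atTop (nhds 0)}

/-- The Hausdorff measure of noncompactness:
`χ(Q) = inf {ε > 0 : Q has a finite ε-net in X}`. -/
noncomputable def hausdorffMNC {X : Type*} [MetricSpace X] (Q : Set X) : ℝ :=
  sInf {ε : ℝ | 0 < ε ∧ ∃ S : Finset X, ∀ x ∈ Q, ∃ s ∈ S, dist x s < ε}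

open Metric Set Bornology Topology

section HausdorffMNC

variable {X : Type*} [MetricSpace X] {Q : Set X} {ε δ : ℝ}

def HasFiniteNet (Q : Set X) (ε : ℝ) : Prop :=
  ∃ S : Finset X, ∀ x ∈ Q, ∃ s ∈ S, dist x s < ε

theorem hausdorffMNC_eq_sInf (Q : Set X) :
    hausdorffMNC Q = sInf {ε | 0 < ε ∧ HasFiniteNet Q ε} :=
  rfl

theorem HasFiniteNet.mono (h : HasFiniteNet Q ε) (hεδ : ε ≤ δ) : HasFiniteNet Q δ :=
  let ⟨S, hS⟩ := h
  ⟨S, fun x hx => (hS x hx).imp fun _ hs => ⟨hs.1, hs.2.trans_le hεδ⟩⟩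

theorem HasFiniteNet.isBounded (h : HasFiniteNet Q ε) : IsBounded Q := by
  obtain ⟨S, hS⟩ := h
  refine ((isBounded_biUnion_finset S).2 fun s _ => isBounded_ball (x := s) (r := ε)).subset
    fun x hx => ?_
  obtain ⟨s, hs, hxs⟩ := hS x hx
  exact mem_biUnion hs (mem_ball.2 hxs)

theorem Bornology.IsBounded.exists_hasFiniteNet (hQ : IsBounded Q) :
    ∃ ε > 0, HasFiniteNet Q ε := by
  rcases Q.eq_empty_or_nonempty with rfl | ⟨x, hx⟩
  · exact ⟨1, one_pos, ∅, by simp⟩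
  obtain ⟨r, hr⟩ := hQ.subset_ball x
  exact ⟨r, pos_of_mem_ball (hr hx), {x}, fun y hy => ⟨x, Finset.mem_singleton_self x, hr hy⟩⟩

theorem totallyBounded_iff_forall_hasFiniteNet :
    TotallyBounded Q ↔ ∀ ε > 0, HasFiniteNet Q ε := by
  refine totallyBounded_iff.trans (forall₂_congr fun ε _ => ⟨?_, ?_⟩)
  · rintro ⟨t, ht, hQt⟩
    refine ⟨ht.toFinset, fun x hx => ?_⟩
    obtain ⟨s, hs, hxs⟩ := mem_iUnion₂.1 (hQt hx)
    exact ⟨s, ht.mem_toFinset.2 hs, mem_ball.1 hxs⟩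
  · rintro ⟨S, hS⟩
    refine ⟨S, S.finite_toSet, fun x hx => ?_⟩
    obtain ⟨s, hs, hxs⟩ := hS x hx
    exact mem_iUnion₂.2 ⟨s, hs, mem_ball.2 hxs⟩

theorem hausdorffMNC_nonneg (Q : Set X) : 0 ≤ hausdorffMNC Q :=
  Real.sInf_nonneg fun _ hε => hε.1.le

theorem hausdorffMNC_le (hε : 0 < ε) (h : HasFiniteNet Q ε) : hausdorffMNC Q ≤ ε :=
  csInf_le ⟨0, fun _ hδ => hδ.1.le⟩ ⟨hε, h⟩

theorem hausdorffMNC_of_not_isBounded (hQ : ¬IsBounded Q) : hausdorffMNC Q = 0 := by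
  rw [hausdorffMNC_eq_sInf, show {ε | 0 < ε ∧ HasFiniteNet Q ε} = ∅ from
    eq_empty_of_forall_notMem fun ε hε => hQ hε.2.isBounded, Real.sInf_empty]

theorem totallyBounded_iff_isBounded_and_hausdorffMNC_eq_zero :
    TotallyBounded Q ↔ IsBounded Q ∧ hausdorffMNC Q = 0 := by
  rw [totallyBounded_iff_forall_hasFiniteNet]
  refine ⟨fun h => ⟨(h 1 one_pos).isBounded, le_antisymm ?_ (hausdorffMNC_nonneg Q)⟩, ?_⟩
  · exact le_of_forall_pos_le_add fun ε hε => by simpa using hausdorffMNC_le hε (h ε hε)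
  · rintro ⟨hQ, h0⟩ ε hε
    obtain ⟨η, hη, hQη⟩ := hQ.exists_hasFiniteNet
    obtain ⟨δ, ⟨-, hδ⟩, hδε⟩ := exists_lt_of_csInf_lt (s := {ε | 0 < ε ∧ HasFiniteNet Q ε})
      ⟨η, hη, hQη⟩ (h0.trans_lt hε)
    exact hδ.mono hδε.le

end HausdorffMNC

theorem isCompact_closure_iff_totallyBounded {α : Type*} [UniformSpace α] [CompleteSpace α]
    {s : Set α} : IsCompact (closure s) ↔ TotallyBounded s :=
  ⟨fun h => totallyBounded_closure.1 h.totallyBounded,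
    fun h => h.closure.isCompact_of_isClosed isClosed_closure⟩

theorem tendsto_zero_iff_bddAbove_and_limsup_eq_zero {r : ℕ → ℝ} (h0 : ∀ n, 0 ≤ r n) :
    Tendsto r atTop (𝓝 0) ↔ BddAbove (range r) ∧ limsup r atTop = 0 := by
  refine ⟨fun h => ⟨h.bddAbove_range, h.limsup_eq⟩, fun ⟨hbdd, hL⟩ => ?_⟩
  refine tendsto_order.2 ⟨fun a ha => Eventually.of_forall fun n => ha.trans_le (h0 n),
    fun a ha => ?_⟩
  exact eventually_lt_of_limsup_lt (hL.trans_lt ha) hbdd.isBoundedUnder_of_range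

namespace c0Space

def mk (f : ℕ → ℝ) (hf : Tendsto f atTop (𝓝 0)) : c0Space :=
  ⟨⟨f, memℓp_infty hf.norm.bddAbove_range⟩, hf⟩

instance : Zero c0Space :=
  ⟨mk 0 tendsto_const_nhds⟩

def ofFin {m : ℕ} (v : Fin m → ℝ) : c0Space :=
  mk (fun n => if h : n < m then v ⟨n, h⟩ else 0) <|
    tendsto_const_nhds.congr' <| eventually_atTop.2 ⟨m, fun _ hn => by simp [hn.not_gt]⟩

@[simp]
theorem zero_apply (n : ℕ) : (0 : c0Space).1 n = 0 :=
  rfl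

theorem ofFin_apply {m : ℕ} (v : Fin m → ℝ) (n : ℕ) :
    (ofFin v).1 n = if h : n < m then v ⟨n, h⟩ else 0 :=
  rfl

theorem abs_apply_le_norm (y : c0Space) (n : ℕ) : |y.1 n| ≤ ‖y.1‖ :=
  lp.norm_apply_le_norm ENNReal.top_ne_zero y.1 n

theorem abs_sub_apply_le_dist (y s : c0Space) (n : ℕ) : |y.1 n - s.1 n| ≤ dist y s := by
  simpa [Subtype.dist_eq, dist_eq_norm] using
    lp.norm_apply_le_norm ENNReal.top_ne_zero (y.1 - s.1) n

theorem dist_le_of_forall_abs_sub_le {y s : c0Space} {b : ℝ} (hb : 0 ≤ b)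
    (h : ∀ n, |y.1 n - s.1 n| ≤ b) : dist y s ≤ b := by
  rw [Subtype.dist_eq, dist_eq_norm]
  exact lp.norm_le_of_forall_le hb fun n => by simpa using h n

theorem isClosed_setOf_tendsto_zero :
    IsClosed {x : lp (fun _ : ℕ => ℝ) ⊤ | Tendsto (fun n => x n) atTop (𝓝 0)} := by
  refine isClosed_of_closure_subset fun x hx => Metric.tendsto_atTop.2 fun ε hε => ?_
  obtain ⟨y, hy, hxy⟩ := Metric.mem_closure_iff.1 hx (ε / 2) (half_pos hε)
  obtain ⟨N, hN⟩ := Metric.tendsto_atTop.1 hy (ε / 2) (half_pos hε)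
  refine ⟨N, fun n hn => ?_⟩
  have hxyn : dist (x n) (y n) ≤ dist x y := by
    simpa [dist_eq_norm] using lp.norm_apply_le_norm ENNReal.top_ne_zero (x - y) n
  calc dist (x n) 0 ≤ dist (x n) (y n) + dist (y n) 0 := dist_triangle _ _ _
    _ < ε / 2 + ε / 2 := add_lt_add_of_le_of_lt (hxyn.trans hxy.le) (hN n hn)
    _ = ε := add_halves ε

instance : CompleteSpace c0Space :=
  isClosed_setOf_tendsto_zero.completeSpace_coe

end c0Space

open c0Space

theorem hasFiniteNet_of_abs_apply_le {Q : Set c0Space} {C b c : ℝ} {m : ℕ}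
    (hC : ∀ y ∈ Q, ∀ n, |y.1 n| ≤ C) (hb : ∀ y ∈ Q, ∀ n, m ≤ n → |y.1 n| ≤ b) (hbc : b < c) :
    HasFiniteNet Q c := by
  rcases Q.eq_empty_or_nonempty with rfl | ⟨y₀, hy₀⟩
  · exact ⟨∅, by simp⟩
  have hc : 0 < c := ((abs_nonneg _).trans (hb y₀ hy₀ m le_rfl)).trans_lt hbc
  obtain ⟨t, ht, hcover⟩ := totallyBounded_iff.1
    (isCompact_Icc (a := fun _ : Fin m => -C) (b := fun _ => C)).totallyBounded c hc
  refine ⟨(ht.image ofFin).toFinset, fun y hy => ?_⟩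
  have hyC : (fun i : Fin m => y.1 i) ∈ Icc (fun _ => -C) fun _ => C :=
    ⟨fun i => (abs_le.1 (hC y hy i)).1, fun i => (abs_le.1 (hC y hy i)).2⟩
  obtain ⟨v, hv, hyv⟩ := mem_iUnion₂.1 (hcover hyC)
  refine ⟨ofFin v, (ht.image ofFin).mem_toFinset.2 (mem_image_of_mem _ hv), ?_⟩
  refine (dist_le_of_forall_abs_sub_le (le_max_of_le_left dist_nonneg) fun n => ?_).trans_lt
    (max_lt (mem_ball.1 hyv) hbc)
  by_cases hn : n < m
  · simpa [ofFin_apply, hn, Real.dist_eq] using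
      le_max_of_le_left (dist_le_pi_dist (fun i : Fin m => y.1 i) v ⟨n, hn⟩)
  · simpa [ofFin_apply, hn] using le_max_of_le_right (hb y hy n (not_lt.1 hn))

theorem HasFiniteNet.eventually_abs_apply_lt {Q : Set c0Space} {ε δ : ℝ} (h : HasFiniteNet Q ε)
    (hδ : 0 < δ) : ∀ᶠ n in atTop, ∀ y ∈ Q, |y.1 n| < ε + δ := by
  obtain ⟨S, hS⟩ := h
  have hsmall : ∀ᶠ n in atTop, ∀ s ∈ S, |s.1 n| < δ :=
    (eventually_all_finset S).2 fun s _ =>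
      (Metric.tendsto_nhds.1 s.2 δ hδ).mono fun n hn => by rwa [Real.dist_0_eq_abs] at hn
  filter_upwards [hsmall] with n hn y hy
  obtain ⟨s, hs, hys⟩ := hS y hy
  linarith [abs_sub_abs_le_abs_sub (y.1 n) (s.1 n), abs_sub_apply_le_dist y s n, hn s hs]

section CoordinateSuprema

variable {Q : Set c0Space} {r : ℕ → ℝ}
  (hr : ∀ n, IsLUB ((fun y : c0Space => |y.1 n|) '' Q) (r n))
include hr

theorem abs_apply_le_of_isLUB {y : c0Space} (hy : y ∈ Q) (n : ℕ) : |y.1 n| ≤ r n :=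
  (hr n).1 (mem_image_of_mem _ hy)

theorem nonneg_of_isLUB (n : ℕ) : 0 ≤ r n := by
  obtain ⟨_, y, hy, rfl⟩ := (hr n).nonempty
  exact (abs_nonneg _).trans (abs_apply_le_of_isLUB hr hy n)

theorem isBounded_iff_bddAbove_of_isLUB : IsBounded Q ↔ BddAbove (range r) := by
  constructor
  · intro hQ
    obtain ⟨R, hR⟩ := (isBounded_iff_subset_closedBall 0).1 hQ
    refine ⟨R, forall_mem_range.2 fun n => (hr n).2 ?_⟩
    rintro _ ⟨y, hy, rfl⟩
    simpa using (abs_sub_apply_le_dist y 0 n).trans (mem_closedBall.1 (hR hy))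
  · rintro ⟨C, hC⟩
    have hC0 : 0 ≤ C := (nonneg_of_isLUB hr 0).trans (hC (mem_range_self 0))
    refine (isBounded_closedBall (x := 0) (r := C)).subset fun y hy => mem_closedBall.2 ?_
    exact dist_le_of_forall_abs_sub_le hC0 fun n => by
      simpa using (abs_apply_le_of_isLUB hr hy n).trans (hC (mem_range_self n))

theorem hausdorffMNC_eq_limsup_of_isLUB : hausdorffMNC Q = limsup r atTop := by
  by_cases hQ : IsBounded Q
  swap
  · -- both sides are the junk value `sInf ∅ = 0`
    rw [hausdorffMNC_of_not_isBounded hQ, Real.limsup_of_not_isBoundedUnder]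
    exact fun h => hQ ((isBounded_iff_bddAbove_of_isLUB hr).2 h.bddAbove_range)
  obtain ⟨C, hC⟩ := (isBounded_iff_bddAbove_of_isLUB hr).1 hQ
  have hbdd : IsBoundedUnder (· ≤ ·) atTop r := BddAbove.isBoundedUnder_of_range ⟨C, hC⟩
  have hL : 0 ≤ limsup r atTop :=
    le_limsup_of_frequently_le (Frequently.of_forall (nonneg_of_isLUB hr)) hbdd
  apply le_antisymm
  · refine le_of_forall_gt_imp_ge_of_dense fun c hc => ?_
    obtain ⟨b, hLb, hbc⟩ := exists_between hc
    obtain ⟨m, hm⟩ := eventually_atTop.1 (eventually_lt_of_limsup_lt hLb hbdd)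
    exact hausdorffMNC_le (hL.trans_lt (hLb.trans hbc)) <| hasFiniteNet_of_abs_apply_le
      (fun y hy n => (abs_apply_le_of_isLUB hr hy n).trans (hC (mem_range_self n)))
      (fun y hy n hn => (abs_apply_le_of_isLUB hr hy n).trans (hm n hn).le) hbc
  · obtain ⟨η, hη, hQη⟩ := hQ.exists_hasFiniteNet
    refine le_csInf ⟨η, hη, hQη⟩ fun ε ⟨_, hε⟩ => le_of_forall_pos_le_add fun δ hδ => ?_
    refine limsup_le_of_le (isCoboundedUnder_le_of_le atTop (nonneg_of_isLUB hr))
      ((HasFiniteNet.eventually_abs_apply_lt hε hδ).mono fun n hn => (hr n).2 ?_)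
    rintro _ ⟨y, hy, rfl⟩
    exact (hn y hy).le

theorem isCompact_closure_iff_tendsto_of_isLUB :
    IsCompact (closure Q) ↔ Tendsto r atTop (𝓝 0) := by
  rw [isCompact_closure_iff_totallyBounded, totallyBounded_iff_isBounded_and_hausdorffMNC_eq_zero,
    isBounded_iff_bddAbove_of_isLUB hr, hausdorffMNC_eq_limsup_of_isLUB hr,
    tendsto_zero_iff_bddAbove_and_limsup_eq_zero (nonneg_of_isLUB hr)]

end CoordinateSuprema

theorem abs_tsum_mul_le_tsum_abs {ι : Type*} {a x : ι → ℝ} (ha : Summable fun k => |a k|)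
    (hx : ∀ k, |x k| ≤ 1) : |∑' k, a k * x k| ≤ ∑' k, |a k| := by
  have hle : ∀ k, |a k * x k| ≤ |a k| := fun k => by
    rw [abs_mul]
    exact mul_le_of_le_one_right (abs_nonneg _) (hx k)
  have hsum : Summable fun k => |a k * x k| :=
    Summable.of_nonneg_of_le (fun _ => abs_nonneg _) hle ha
  calc |∑' k, a k * x k| ≤ ∑' k, |a k * x k| := by
        simpa only [Real.norm_eq_abs] using
          norm_tsum_le_tsum_norm (f := fun k => a k * x k) (by simpa only [Real.norm_eq_abs])
    _ ≤ ∑' k, |a k| := hsum.tsum_le_tsum hle ha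

theorem exists_norm_le_one_tsum_abs_sub_lt {a : ℕ → ℝ} (ha : Summable fun k => |a k|) {δ : ℝ}
    (hδ : 0 < δ) : ∃ x : c0Space, ‖x.1‖ ≤ 1 ∧ ∑' k, |a k| - δ < ∑' k, a k * x.1 k := by
  obtain ⟨K, hK⟩ : ∃ K, ∑' k, |a k| - δ < ∑ k ∈ Finset.range K, |a k| :=
    (ha.hasSum.tendsto_sum_nat.eventually (eventually_gt_nhds (sub_lt_self _ hδ))).exists
  set x := ofFin fun i : Fin K => (SignType.sign (a i) : ℝ)
  have hx : ∑' k, a k * x.1 k = ∑ k ∈ Finset.range K, |a k| := by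
    rw [tsum_eq_sum (s := Finset.range K) fun k hk => by
      rw [ofFin_apply, dif_neg (Finset.mem_range.not.1 hk), mul_zero]]
    refine Finset.sum_congr rfl fun k hk => ?_
    rw [ofFin_apply, dif_pos (Finset.mem_range.1 hk), self_mul_sign]
  refine ⟨x, lp.norm_le_of_forall_le zero_le_one fun k => ?_, hx ▸ hK⟩
  by_cases hk : k < K
  · rw [ofFin_apply, dif_pos hk]
    cases SignType.sign (a k) <;> simp
  · rw [ofFin_apply, dif_neg hk, norm_zero]
    exact zero_le_one

def matrixImageUnitBall (A : ℕ → ℕ → ℝ) : Set c0Space :=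
  {y | ∃ x : c0Space, ‖x.1‖ ≤ 1 ∧ ∀ n, y.1 n = ∑' k, A n k * x.1 k}

theorem isLUB_abs_apply_matrixImageUnitBall {A : ℕ → ℕ → ℝ}
    (hrows : ∀ n, Summable fun k => |A n k|)
    (hmap : ∀ x : c0Space, Tendsto (fun n => ∑' k, A n k * x.1 k) atTop (𝓝 0)) (n : ℕ) :
    IsLUB ((fun y : c0Space => |y.1 n|) '' matrixImageUnitBall A) (∑' k, |A n k|) := by
  refine ⟨?_, fun a ha => le_of_forall_pos_lt_add fun δ hδ => ?_⟩
  · rintro _ ⟨y, ⟨x, hx, hxy⟩, rfl⟩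
    dsimp only
    rw [hxy n]
    exact abs_tsum_mul_le_tsum_abs (hrows n) fun k => (abs_apply_le_norm x k).trans hx
  · obtain ⟨x, hx, hlt⟩ := exists_norm_le_one_tsum_abs_sub_lt (hrows n) hδ
    have hy : c0Space.mk _ (hmap x) ∈ matrixImageUnitBall A := ⟨x, hx, fun _ => rfl⟩
    have hle : |∑' k, A n k * x.1 k| ≤ a := ha (mem_image_of_mem _ hy)
    linarith [le_abs_self (∑' k, A n k * x.1 k)]

/-- For `A ∈ (c₀, c₀)`, the Hausdorff measure of noncompactness of the induced operator
`L_A` satisfies `‖L_A‖_χ = χ(L_A(B_{c₀})) = limsup_n ∑_k |a_{nk}|`; in particular `L_A`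
is compact (its image of the unit ball is relatively compact) iff `lim_n ∑_k |a_{nk}| = 0`. -/
theorem chi_matrix_operator_c0_c0 (A : ℕ → ℕ → ℝ)
    (hrows : ∀ n, Summable fun k => |A n k|)
    (hmap : ∀ x : c0Space, Tendsto (fun n => ∑' k, A n k * x.1 k) atTop (nhds 0)) :
    hausdorffMNC {y : c0Space | ∃ x : c0Space, ‖x.1‖ ≤ 1 ∧
        ∀ n, y.1 n = ∑' k, A n k * x.1 k} =
      limsup (fun n => ∑' k, |A n k|) atTop ∧
    (IsCompact (closure {y : c0Space | ∃ x : c0Space, ‖x.1‖ ≤ 1 ∧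
        ∀ n, y.1 n = ∑' k, A n k * x.1 k}) ↔
      Tendsto (fun n => ∑' k, |A n k|) atTop (nhds 0)) := by
  have hr := isLUB_abs_apply_matrixImageUnitBall hrows hmap
  exact ⟨hausdorffMNC_eq_limsup_of_isLUB hr, isCompact_closure_iff_tendsto_of_isLUB hr⟩
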